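/- arXiv:1303.7312 — 5 statements merged into one kernel-verified Lean document; each statement's English description precedes it below -/
import Mathlib

section
/- Let $m \geq 1$. There exist polynomials $A_k(t_1,\ldots,t_m) \in \mathbb{C}[t_1,\ldots,t_m]$, for $m+1 \leq k \leq 2m$, each weighted homogeneous of weighted degree $k$ (with $t_i$ of weight $i$), such that a polynomial $a_{2m}\lambda^{2m} + a_{2m-1}\lambda^{2m-1} + \cdots + a_1\lambda + 1$ over $\mathbb{C}$ is the square of a polynomial of degree at most $m$ if and only if $a_k = A_k(a_1,\ldots,a_m)$ for every $k$ with $m+1 \leq k \leq 2m$. -/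
open Polynomial Finset

noncomputable def Bpoly (m : ℕ) : ℕ → MvPolynomial (Fin m) ℂ
  | 0 => 1
  | (j+1) =>
    if h : j + 1 ≤ m then
      MvPolynomial.C (2⁻¹ : ℂ) *
        (MvPolynomial.X ⟨j, by omega⟩ -
          ∑ i ∈ (Finset.Icc 1 j).attach, Bpoly m i.1 * Bpoly m (j+1-i.1))
    else 0
  decreasing_by
    · have h2 := Finset.mem_Icc.mp i.2; omega
    · have h2 := Finset.mem_Icc.mp i.2; omega

lemma Bpoly_zero (m : ℕ) : Bpoly m 0 = 1 := by rw [Bpoly]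

lemma Bpoly_succ (m j : ℕ) (h : j + 1 ≤ m) :
    Bpoly m (j+1) = MvPolynomial.C (2⁻¹ : ℂ) *
        (MvPolynomial.X ⟨j, by omega⟩ -
          ∑ i ∈ Finset.Icc 1 j, Bpoly m i * Bpoly m (j+1-i)) := by
  rw [Bpoly, dif_pos h, Finset.sum_attach (Finset.Icc 1 j) (fun i => Bpoly m i * Bpoly m (j+1-i))]

lemma Bpoly_gt (m j : ℕ) (h : m < j) : Bpoly m j = 0 := by
  obtain ⟨j', rfl⟩ : ∃ j', j = j' + 1 := ⟨j - 1, by omega⟩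
  rw [Bpoly, dif_neg (by omega)]

lemma Bpoly_hom (m : ℕ) : ∀ j, (Bpoly m j).IsWeightedHomogeneous
    (fun i : Fin m => i.1 + 1) j := by
  intro j
  induction j using Nat.strong_induction_on with
  | _ j ih =>
    match j with
    | 0 => rw [Bpoly_zero]; exact MvPolynomial.isWeightedHomogeneous_one _ _
    | (j+1) =>
      by_cases h : j + 1 ≤ m
      · rw [Bpoly_succ m j h]
        have h0 : MvPolynomial.IsWeightedHomogeneous (fun i : Fin m => i.1 + 1)
            (MvPolynomial.C (2⁻¹ : ℂ)) 0 := MvPolynomial.isWeightedHomogeneous_C _ _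
        have hsub : MvPolynomial.IsWeightedHomogeneous (fun i : Fin m => i.1 + 1)
            (MvPolynomial.X ⟨j, by omega⟩ -
              ∑ i ∈ Finset.Icc 1 j, Bpoly m i * Bpoly m (j+1-i)) (j+1) := by
          rw [← MvPolynomial.mem_weightedHomogeneousSubmodule]
          apply sub_mem
          · rw [MvPolynomial.mem_weightedHomogeneousSubmodule]
            have := MvPolynomial.isWeightedHomogeneous_X ℂ
              (fun i : Fin m => i.1 + 1) (⟨j, by omega⟩ : Fin m)
            simpa using this
          · apply sum_mem
            intro i hi
            have hi' := Finset.mem_Icc.mp hi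
            rw [MvPolynomial.mem_weightedHomogeneousSubmodule]
            have := (ih i (by omega)).mul (ih (j+1-i) (by omega))
            have he : i + (j+1-i) = j+1 := by omega
            rwa [he] at this
        have := h0.mul hsub
        simpa using this
      · rw [Bpoly_gt m (j+1) (by omega)]
        exact MvPolynomial.isWeightedHomogeneous_zero _ _ _

noncomputable def bC (m : ℕ) (a : ℕ → ℂ) (j : ℕ) : ℂ :=
  MvPolynomial.eval (fun i : Fin m => a (i.1+1)) (Bpoly m j)

lemma bC_zero (m : ℕ) (a : ℕ → ℂ) : bC m a 0 = 1 := by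
  simp [bC, Bpoly_zero]

lemma bC_gt (m : ℕ) (a : ℕ → ℂ) {j : ℕ} (h : m < j) : bC m a j = 0 := by
  simp [bC, Bpoly_gt m j h]

lemma bC_eq (m : ℕ) (a : ℕ → ℂ) {j : ℕ} (h1 : 1 ≤ j) (h2 : j ≤ m) :
    2 * bC m a j + ∑ i ∈ Finset.Icc 1 (j-1), bC m a i * bC m a (j-i) = a j := by
  obtain ⟨j', rfl⟩ : ∃ j', j = j' + 1 := ⟨j - 1, by omega⟩
  have := Bpoly_succ m j' h2
  have heval := congrArg (MvPolynomial.eval (fun i : Fin m => a (i.1+1))) this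
  rw [map_mul, map_sub, map_sum] at heval
  simp only [MvPolynomial.eval_C, MvPolynomial.eval_X, map_mul] at heval
  have : bC m a (j'+1) = 2⁻¹ * (a (j'+1) -
      ∑ i ∈ Finset.Icc 1 j', bC m a i * bC m a (j'+1-i)) := heval
  have hs : (j' + 1) - 1 = j' := by omega
  rw [hs, this]; ring

lemma sum_split {n : ℕ} (hn : 1 ≤ n) (g : ℕ → ℂ) :
    ∑ i ∈ Finset.range (n+1), g i = g 0 + g n + ∑ i ∈ Finset.Icc 1 (n-1), g i := by
  have hset : Finset.range (n+1) = insert 0 (insert n (Finset.Icc 1 (n-1))) := by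
    ext x; simp [Finset.mem_Icc, Finset.mem_range]; omega
  rw [hset, Finset.sum_insert (by simp [Finset.mem_Icc]; omega),
    Finset.sum_insert (by simp [Finset.mem_Icc]; omega)]
  ring

lemma bC_unique (m : ℕ) (a : ℕ → ℂ) (c : ℕ → ℂ) (h0 : c 0 = 1)
    (hgt : ∀ j, m < j → c j = 0)
    (heq : ∀ j, 1 ≤ j → j ≤ m → 2 * c j + ∑ i ∈ Finset.Icc 1 (j-1), c i * c (j-i) = a j) :
    ∀ j, c j = bC m a j := by
  intro j
  induction j using Nat.strong_induction_on with
  | _ j ih =>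
    rcases Nat.eq_zero_or_pos j with rfl | hj
    · rw [h0, bC_zero]
    by_cases hjm : j ≤ m
    · have e1 := heq j hj hjm
      have e2 := bC_eq m a hj hjm
      have hsum : ∑ i ∈ Finset.Icc 1 (j-1), c i * c (j-i)
          = ∑ i ∈ Finset.Icc 1 (j-1), bC m a i * bC m a (j-i) := by
        apply Finset.sum_congr rfl
        intro i hi
        have hi' := Finset.mem_Icc.mp hi
        rw [ih i (by omega), ih (j-i) (by omega)]
      rw [hsum] at e1
      have : 2 * c j = 2 * bC m a j := by linear_combination e1 - e2
      field_simp at this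
      exact this
    · rw [hgt j (by omega), bC_gt m a (by omega)]

lemma coeff_sq (r : Polynomial ℂ) (n : ℕ) :
    (r^2).coeff n = ∑ i ∈ Finset.range (n+1), r.coeff i * r.coeff (n-i) := by
  rw [sq, Polynomial.coeff_mul, Finset.Nat.sum_antidiagonal_eq_sum_range_succ_mk]

lemma coeff_P (m : ℕ) (a : ℕ → ℂ) (n : ℕ) :
    ((1 : Polynomial ℂ) + ∑ k ∈ Finset.Icc 1 (2*m),
      Polynomial.C (a k) * Polynomial.X ^ k).coeff n =
    if n = 0 then 1 else if n ≤ 2*m then a n else 0 := by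
  rw [Polynomial.coeff_add, Polynomial.finset_sum_coeff]
  simp only [Polynomial.coeff_C_mul, Polynomial.coeff_X_pow, Polynomial.coeff_one,
    mul_ite, mul_one, mul_zero]
  rw [Finset.sum_ite_eq (Finset.Icc 1 (2*m)) n a]
  simp only [Finset.mem_Icc]
  split_ifs with h1 h2 h3 h4 h5 <;> simp_all

/-- There exist weighted homogeneous polynomials `A_k(t_1,…,t_m)` of weighted degree `k`,
for `m+1 ≤ k ≤ 2m` (here `A j` for `j : Fin m` plays the role of `A_{m+1+j}`), such that
`a_{2m} λ^{2m} + ⋯ + a_1 λ + 1` is the square of a polynomial of degree at most `m` iff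
`a_k = A_k(a_1,…,a_m)` for all `m+1 ≤ k ≤ 2m`. -/
theorem stmt2 (m : ℕ) (hm : 1 ≤ m) :
    ∃ A : Fin m → MvPolynomial (Fin m) ℂ,
      (∀ k : Fin m,
        (A k).IsWeightedHomogeneous (fun i : Fin m => i.1 + 1) (m + 1 + k.1)) ∧
      ∀ a : ℕ → ℂ,
        ((∃ r : Polynomial ℂ, r.natDegree ≤ m ∧
            1 + ∑ k ∈ Finset.Icc 1 (2 * m),
              Polynomial.C (a k) * Polynomial.X ^ k = r ^ 2) ↔
          ∀ k : Fin m,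
            a (m + 1 + k.1) = MvPolynomial.eval (fun i : Fin m => a (i.1 + 1)) (A k)) := by
  refine ⟨fun k => ∑ i ∈ Finset.range (m+1+k.1+1), Bpoly m i * Bpoly m (m+1+k.1-i), ?_, ?_⟩
  · intro k
    apply MvPolynomial.IsWeightedHomogeneous.sum
    intro i hi
    have hi' := Finset.mem_range.mp hi
    have := (Bpoly_hom m i).mul (Bpoly_hom m (m+1+k.1-i))
    have he : i + (m+1+k.1-i) = m+1+k.1 := by omega
    rwa [he] at this
  intro a
  have hevalA : ∀ k : Fin m,
      MvPolynomial.eval (fun i : Fin m => a (i.1 + 1))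
        (∑ i ∈ Finset.range (m+1+k.1+1), Bpoly m i * Bpoly m (m+1+k.1-i))
      = ∑ i ∈ Finset.range (m+1+k.1+1), bC m a i * bC m a (m+1+k.1-i) := by
    intro k
    rw [map_sum]
    exact Finset.sum_congr rfl fun i _ => by rw [map_mul]; rfl
  constructor
  · rintro ⟨r, hd, heq⟩ k
    -- coeff 0 of both sides
    have h0 : r.coeff 0 * r.coeff 0 = 1 := by
      have := congrArg (fun p => Polynomial.coeff p 0) heq
      rw [coeff_P m a 0, coeff_sq] at this
      simp at this
      exact this.symm
    obtain ⟨s, hs0, hsd, hssq⟩ : ∃ s : Polynomial ℂ,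
        s.coeff 0 = 1 ∧ s.natDegree ≤ m ∧ s^2 = r^2 := by
      rcases mul_self_eq_one_iff.mp h0 with h | h
      · exact ⟨r, h, hd, rfl⟩
      · exact ⟨-r, by simp [h], by simpa using hd, by ring⟩
    have hcoeffP : ∀ n, (1 + ∑ k ∈ Finset.Icc 1 (2 * m),
        Polynomial.C (a k) * Polynomial.X ^ k).coeff n = (s^2).coeff n := by
      intro n; rw [heq, hssq]
    have hgt : ∀ j, m < j → s.coeff j = 0 := fun j hj =>
      Polynomial.coeff_eq_zero_of_natDegree_lt (lt_of_le_of_lt hsd hj)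
    have hc : ∀ j, s.coeff j = bC m a j := by
      apply bC_unique m a _ hs0 hgt
      intro j hj1 hj2
      have := hcoeffP j
      rw [coeff_P, coeff_sq, if_neg (by omega), if_pos (by omega),
        sum_split hj1] at this
      simp only [Nat.sub_self, Nat.sub_zero, hs0, one_mul, mul_one] at this
      rw [this]; ring
    have hK1 : 1 ≤ m + 1 + k.1 := by omega
    have hK2 : m + 1 + k.1 ≤ 2 * m := by have := k.2; omega
    have := hcoeffP (m + 1 + k.1)
    rw [coeff_P, coeff_sq, if_neg (by omega), if_pos hK2] at this
    rw [this, hevalA k]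
    exact Finset.sum_congr rfl fun i _ => by rw [hc i, hc (m+1+k.1-i)]
  · intro h
    have rcoeff : ∀ n, (∑ j ∈ Finset.range (m+1),
        Polynomial.C (bC m a j) * Polynomial.X ^ j).coeff n = bC m a n := by
      intro n
      rw [Polynomial.finset_sum_coeff]
      simp only [Polynomial.coeff_C_mul, Polynomial.coeff_X_pow, mul_ite, mul_one, mul_zero]
      rw [Finset.sum_ite_eq (Finset.range (m+1)) n (bC m a)]
      split_ifs with hn
      · rfl
      · exact (bC_gt m a (by simpa using hn)).symm
    refine ⟨∑ j ∈ Finset.range (m+1), Polynomial.C (bC m a j) * Polynomial.X ^ j, ?_, ?_⟩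
    · rw [Polynomial.natDegree_le_iff_coeff_eq_zero]
      intro n hn
      rw [rcoeff]
      exact bC_gt m a hn
    · apply Polynomial.ext
      intro n
      rw [coeff_P, coeff_sq]
      simp only [rcoeff]
      rcases Nat.eq_zero_or_pos n with rfl | hn
      · simp [bC_zero]
      rw [if_neg (by omega)]
      by_cases hnm : n ≤ m
      · rw [if_pos (by omega), sum_split hn]
        simp only [Nat.sub_self, Nat.sub_zero, bC_zero, one_mul, mul_one]
        have := bC_eq m a hn hnm
        rw [← this]; ring
      by_cases hn2m : n ≤ 2*m
      · rw [if_pos hn2m]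
        have hk : n - (m+1) < m := by omega
        have := h ⟨n - (m+1), hk⟩
        rw [hevalA ⟨n - (m+1), hk⟩] at this
        have hKn : m + 1 + (n - (m+1)) = n := by omega
        rw [hKn] at this
        exact this
      · rw [if_neg hn2m]
        refine (Finset.sum_eq_zero fun i hi => ?_).symm
        by_cases him : i ≤ m
        · rw [bC_gt m a (j := n - i) (by omega), mul_zero]
        · rw [bC_gt m a (j := i) (by omega), zero_mul]
end

section
/- For any $(a_1,\ldots,a_m) \in \mathbb{C}^m$ there exist unique $(a_{m+1},\ldots,a_{2m}) \in \mathbb{C}^m$ such that $a_{2m}\lambda^{2m} + \cdots + a_1\lambda + 1$ is the square of a polynomial of degree at most $m$ with constant term 1. Consequently, the set of ECO polynomials of degree $2m$ with constant term 1, viewed inside the affine space $\mathbb{A}^{2m}$ of coefficient tuples $(a_1,\ldots,a_{2m})$, is the graph of a polynomial map $\mathbb{C}^m \to \mathbb{C}^m$ and in particular is isomorphic to $\mathbb{C}^m$ as an affine variety. -/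
/-!
Over a commutative ring in which `2` is invertible, a polynomial with constant term `1` has a
unique square root modulo `X ^ (n + 1)` of degree at most `n` with constant term `1`: the
coefficients are found one at a time, because a new top coefficient `t` enters the square only
as `2 t`; uniqueness holds because `r ^ 2 - s ^ 2 = (r - s) (r + s)` and `r + s` is prime to `X`.
Taking this square root for the generic `1 + X₀ λ + ⋯ + X_{m-1} λ ^ m` over
`MvPolynomial (Fin m) R` and reading off the coefficients of its square in degrees
`m + 1, …, 2 m` gives the polynomial map whose graph is the set of ECO polynomials.
-/

open Polynomial Finset

namespace Polynomial

variable {R : Type*} [CommRing R]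

theorem isCoprime_X_of_isUnit_coeff_zero {p : R[X]} (hp : IsUnit (p.coeff 0)) : IsCoprime X p := by
  obtain ⟨q, hq⟩ := X_dvd_sub_C (p := p)
  rw [sub_eq_iff_eq_add'.mp hq, IsCoprime.add_mul_left_right_iff]
  simpa using (isCoprime_mul_unit_left_right (hp.map C) X 1).mpr isCoprime_one_right

theorem eq_zero_of_X_pow_dvd_of_natDegree_le {n : ℕ} {p : R[X]} (hp : p.natDegree ≤ n)
    (h : X ^ (n + 1) ∣ p) : p = 0 := by
  ext d
  rcases Nat.lt_or_ge n d with hd | hd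
  · exact coeff_eq_zero_of_natDegree_lt (hp.trans_lt hd)
  · exact X_pow_dvd_iff.mp h d (Nat.lt_succ_of_le hd)

variable [Invertible (2 : R)]

theorem exists_sq_modEq_X_pow {f : R[X]} (hf : f.coeff 0 = 1) (n : ℕ) :
    ∃ r : R[X], r.natDegree ≤ n ∧ r.coeff 0 = 1 ∧ X ^ (n + 1) ∣ f - r ^ 2 := by
  induction n with
  | zero => exact ⟨1, by simp, by simp, by rw [zero_add, pow_one, X_dvd_iff]; simp [hf]⟩
  | succ n ih =>
    obtain ⟨r, hdeg, h0, q, hq⟩ := ih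
    -- `q.coeff 0` is the coefficient of `X ^ (n + 1)` in `f - r ^ 2`, and adding `t X ^ (n + 1)`
    -- to `r` lowers it by `2 t`.
    set t := ⅟2 * q.coeff 0
    refine ⟨r + C t * X ^ (n + 1), ?_, by simp [h0], ?_⟩
    · exact natDegree_add_le_of_degree_le (hdeg.trans n.le_succ) (natDegree_C_mul_X_pow_le ..)
    · have hX : X ∣ q - 2 * C t * r - C t ^ 2 * X ^ (n + 1) := by
        rw [X_dvd_iff]
        simp [h0, t]
      obtain ⟨s, hs⟩ := hX
      exact ⟨s, by linear_combination X ^ (n + 1) * hs + hq⟩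

theorem eq_of_sq_modEq_X_pow {n : ℕ} {r s : R[X]} (hr : r.natDegree ≤ n)
    (hs : s.natDegree ≤ n) (hr0 : r.coeff 0 = 1) (hs0 : s.coeff 0 = 1)
    (h : X ^ (n + 1) ∣ r ^ 2 - s ^ 2) : r = s := by
  have hcop : IsCoprime (X ^ (n + 1)) (r + s) := by
    refine (isCoprime_X_of_isUnit_coeff_zero ?_).pow_left
    rw [coeff_add, hr0, hs0, one_add_one_eq_two]
    exact isUnit_of_invertible 2
  have hdvd : X ^ (n + 1) ∣ r - s :=
    hcop.dvd_of_dvd_mul_right (by rwa [mul_comm, ← sq_sub_sq])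
  exact sub_eq_zero.mp <|
    eq_zero_of_X_pow_dvd_of_natDegree_le ((natDegree_sub_le r s).trans (max_le hr hs)) hdvd

end Polynomial

noncomputable instance MvPolynomial.invertibleTwo {R σ : Type*} [CommRing R] [Invertible (2 : R)] :
    Invertible (2 : MvPolynomial σ R) :=
  (MvPolynomial.invertibleC σ 2).copy 2 (map_ofNat MvPolynomial.C 2).symm

namespace EcoPolynomial

variable {R : Type*} [CommRing R] {m : ℕ}

noncomputable def headPoly (a : Fin m → R) : R[X] :=
  1 + ∑ k : Fin m, C (a k) * X ^ (k.1 + 1)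

noncomputable def tailPoly (b : Fin m → R) : R[X] :=
  ∑ k : Fin m, C (b k) * X ^ (m + 1 + k.1)

theorem coeff_headPoly_zero (a : Fin m → R) : (headPoly a).coeff 0 = 1 := by
  simp [headPoly]

theorem natDegree_headPoly_le (a : Fin m → R) : (headPoly a).natDegree ≤ m := by
  refine natDegree_add_le_of_degree_le (by simp) (natDegree_sum_le_of_forall_le _ _ fun k _ => ?_)
  exact (natDegree_C_mul_X_pow_le _ _).trans k.2

theorem headPoly_map {S : Type*} [CommRing S] (φ : R →+* S) (a : Fin m → R) :
    (headPoly a).map φ = headPoly (φ ∘ a) := by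
  simp [headPoly, Polynomial.map_sum]

theorem tailPoly_eq_X_pow_mul (b : Fin m → R) :
    tailPoly b = X ^ (m + 1) * ∑ k : Fin m, C (b k) * X ^ k.1 := by
  simp only [tailPoly, mul_sum, pow_add, mul_left_comm]

theorem coeff_tailPoly (b : Fin m → R) (k : Fin m) : (tailPoly b).coeff (m + 1 + k) = b k := by
  simp [tailPoly, Fin.val_inj]

theorem tailPoly_injective : Function.Injective (tailPoly : (Fin m → R) → R[X]) :=
  fun b b' h => funext fun k => by rw [← coeff_tailPoly b, h, coeff_tailPoly]

theorem eq_tailPoly_of_X_pow_dvd {g : R[X]} (hg : g.natDegree ≤ 2 * m) (hX : X ^ (m + 1) ∣ g) :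
    g = tailPoly fun k : Fin m => g.coeff (m + 1 + k) := by
  have hlow : ∀ i ∈ range (m + 1), monomial i (g.coeff i) = 0 := fun i hi => by
    rw [X_pow_dvd_iff.mp hX i (mem_range.mp hi), monomial_zero_right]
  conv_lhs => rw [g.as_sum_range' (m + 1 + m) (by omega), sum_range_add, sum_eq_zero hlow, zero_add]
  rw [tailPoly, Fin.sum_univ_eq_sum_range (fun i => C (g.coeff (m + 1 + i)) * X ^ (m + 1 + i))]
  simp only [C_mul_X_pow_eq_monomial]

variable (R m) [Invertible (2 : R)]

/-- The square root modulo `X ^ (m + 1)` of the generic `headPoly X`; evaluating its coefficients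
at `a` gives the square root of `headPoly a`. -/
noncomputable def genericSqrt : (MvPolynomial (Fin m) R)[X] :=
  (exists_sq_modEq_X_pow (coeff_headPoly_zero (MvPolynomial.X : Fin m → MvPolynomial (Fin m) R))
    m).choose

noncomputable def tailMap (k : Fin m) : MvPolynomial (Fin m) R :=
  (genericSqrt R m ^ 2).coeff (m + 1 + k)

variable {R m}

theorem genericSqrt_spec :
    (genericSqrt R m).natDegree ≤ m ∧ (genericSqrt R m).coeff 0 = 1 ∧
      X ^ (m + 1) ∣
        headPoly (MvPolynomial.X : Fin m → MvPolynomial (Fin m) R) - genericSqrt R m ^ 2 :=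
  (exists_sq_modEq_X_pow (coeff_headPoly_zero _) m).choose_spec

theorem headPoly_add_tailPoly_eq_sq_iff (a b : Fin m → R) :
    (∃ r : R[X], r.natDegree ≤ m ∧ r.coeff 0 = 1 ∧ headPoly a + tailPoly b = r ^ 2) ↔
      b = fun k => MvPolynomial.eval a (tailMap R m k) := by
  obtain ⟨hdeg, h0, hdvd⟩ := genericSqrt_spec (R := R) (m := m)
  set s := (genericSqrt R m).map (MvPolynomial.eval a)
  have hs_deg : s.natDegree ≤ m := natDegree_map_le.trans hdeg
  have hs0 : s.coeff 0 = 1 := by simp [s, h0]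
  have hs_dvd : X ^ (m + 1) ∣ s ^ 2 - headPoly a := by
    have hX : (MvPolynomial.eval a) ∘ MvPolynomial.X = a := funext fun k => MvPolynomial.eval_X ..
    have := Polynomial.map_dvd (MvPolynomial.eval a) hdvd
    rwa [Polynomial.map_sub, headPoly_map, hX, Polynomial.map_pow, Polynomial.map_pow,
      Polynomial.map_X, dvd_sub_comm] at this
  have hsq : headPoly a + tailPoly (fun k => MvPolynomial.eval a (tailMap R m k)) = s ^ 2 := by
    have hcoeff : (fun k : Fin m => (s ^ 2 - headPoly a).coeff (m + 1 + k)) =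
        fun k => MvPolynomial.eval a (tailMap R m k) := by
      funext k
      rw [coeff_sub, coeff_eq_zero_of_natDegree_lt ((natDegree_headPoly_le a).trans_lt (by omega)),
        sub_zero, ← Polynomial.map_pow, coeff_map, tailMap]
    have hdeg2 : (s ^ 2 - headPoly a).natDegree ≤ 2 * m :=
      (natDegree_sub_le _ _).trans (max_le (natDegree_pow_le_of_le 2 hs_deg)
        ((natDegree_headPoly_le a).trans (by omega)))
    rw [← hcoeff, ← eq_tailPoly_of_X_pow_dvd hdeg2 hs_dvd, add_sub_cancel]
  constructor
  · rintro ⟨r, hr, hr0, hr_sq⟩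
    obtain rfl : r = s := by
      refine eq_of_sq_modEq_X_pow hr hs_deg hr0 hs0 ?_
      rw [← hr_sq, ← hsq, add_sub_add_left_eq_sub, tailPoly_eq_X_pow_mul, tailPoly_eq_X_pow_mul,
        ← mul_sub]
      exact dvd_mul_right _ _
    exact tailPoly_injective (add_left_cancel (hr_sq.trans hsq.symm))
  · rintro rfl
    exact ⟨s, hs_deg, hs0, hsq⟩

end EcoPolynomial

theorem stmt3_general (m : ℕ) :
    (∀ a : Fin m → ℂ, ∃! b : Fin m → ℂ,
      ∃ r : Polynomial ℂ, r.natDegree ≤ m ∧ r.coeff 0 = 1 ∧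
        1 + (∑ k : Fin m, Polynomial.C (a k) * Polynomial.X ^ (k.1 + 1))
          + (∑ k : Fin m, Polynomial.C (b k) * Polynomial.X ^ (m + 1 + k.1)) = r ^ 2) ∧
    ∃ P : Fin m → MvPolynomial (Fin m) ℂ, ∀ a b : Fin m → ℂ,
      ((∃ r : Polynomial ℂ, r.natDegree ≤ m ∧ r.coeff 0 = 1 ∧
        1 + (∑ k : Fin m, Polynomial.C (a k) * Polynomial.X ^ (k.1 + 1))
          + (∑ k : Fin m, Polynomial.C (b k) * Polynomial.X ^ (m + 1 + k.1)) = r ^ 2) ↔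
        b = fun k => MvPolynomial.eval a (P k)) :=
  have key := EcoPolynomial.headPoly_add_tailPoly_eq_sq_iff (R := ℂ) (m := m)
  ⟨fun a => ⟨_, (key a _).mpr rfl, fun b hb => (key a b).mp hb⟩,
    EcoPolynomial.tailMap ℂ m, key⟩

/-- For any `(a_1,…,a_m) ∈ ℂ^m` there are unique `(a_{m+1},…,a_{2m}) ∈ ℂ^m` making
`a_{2m} λ^{2m} + ⋯ + a_1 λ + 1` the square of a polynomial of degree at most `m` with
constant term `1`; consequently, inside the affine space of coefficients, the set of ECO
polynomials is the graph of a polynomial map `ℂ^m → ℂ^m` (hence isomorphic to `ℂ^m`).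
Here `a k` is `a_{k+1}` and `b k` is `a_{m+1+k}` for `k : Fin m`. -/
theorem stmt3 (m : ℕ) (hm : 1 ≤ m) :
    (∀ a : Fin m → ℂ, ∃! b : Fin m → ℂ,
      ∃ r : Polynomial ℂ, r.natDegree ≤ m ∧ r.coeff 0 = 1 ∧
        1 + (∑ k : Fin m, Polynomial.C (a k) * Polynomial.X ^ (k.1 + 1))
          + (∑ k : Fin m, Polynomial.C (b k) * Polynomial.X ^ (m + 1 + k.1)) = r ^ 2) ∧
    ∃ P : Fin m → MvPolynomial (Fin m) ℂ, ∀ a b : Fin m → ℂ,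
      ((∃ r : Polynomial ℂ, r.natDegree ≤ m ∧ r.coeff 0 = 1 ∧
        1 + (∑ k : Fin m, Polynomial.C (a k) * Polynomial.X ^ (k.1 + 1))
          + (∑ k : Fin m, Polynomial.C (b k) * Polynomial.X ^ (m + 1 + k.1)) = r ^ 2) ↔
        b = fun k => MvPolynomial.eval a (P k)) :=
  stmt3_general m
end

section
/- Let $n \geq 4$ and $m \geq 3$. In the space of homogeneous polynomials of degree $m+1$ in $z_1,\ldots,z_n$ over $\mathbb{C}$, consider $V = \{(v_1 z_2 z_3 + v_2 z_1 z_3 + v_3 z_1 z_2)(z_4^{m-1} + \cdots + z_n^{m-1}) + \sum_{i=4}^n v_i z_1 z_2 z_3 z_i^{m-2} : v_i \in \mathbb{C}\}$ and $W = \{\sum_{i,j=1}^n s_j^i z_i z_j^m : s_j^i \in \mathbb{C}\}$. Then $\dim V = n$, $\dim W = n^2$, and $V \cap W = 0$. -/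
open MvPolynomial Finset

private noncomputable def E2 {n : ℕ} (m : ℕ) (a b j : Fin n) : Fin n →₀ ℕ :=
  Finsupp.single a 1 + Finsupp.single b 1 + Finsupp.single j (m - 1)

private noncomputable def E3 {n : ℕ} (m : ℕ) (a b c i : Fin n) : Fin n →₀ ℕ :=
  Finsupp.single a 1 + Finsupp.single b 1 + Finsupp.single c 1 + Finsupp.single i (m - 2)

private lemma E2_apply {n : ℕ} (m : ℕ) (a b j x : Fin n) :
    E2 m a b j x = (if a = x then 1 else 0) + (if b = x then 1 else 0)
      + (if j = x then m - 1 else 0) := by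
  simp [E2, Finsupp.single_apply]; split_ifs <;> first | omega | exact absurd ‹False› not_false

private lemma E3_apply {n : ℕ} (m : ℕ) (a b c i x : Fin n) :
    E3 m a b c i x = (if a = x then 1 else 0) + (if b = x then 1 else 0)
      + (if c = x then 1 else 0) + (if i = x then m - 2 else 0) := by
  simp [E3, Finsupp.single_apply]; split_ifs <;> first | omega | exact absurd ‹False› not_false

private lemma finsupp_ne {n : ℕ} {f g : Fin n →₀ ℕ} (x : Fin n) (h : f x ≠ g x) : f ≠ g :=
  fun e => h (by rw [e])

private lemma fin_ne {n : ℕ} {a b : Fin n} (h : a.1 ≠ b.1) : a ≠ b :=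
  fun e => h (congrArg Fin.val e)

private lemma prodE2 {n m : ℕ} (a b j : Fin n) :
    (X a : MvPolynomial (Fin n) ℂ) * X b * X j ^ (m - 1) = monomial (E2 m a b j) 1 := by
  rw [X_pow_eq_monomial, X, X, monomial_mul, monomial_mul, one_mul, one_mul]; rfl

private lemma prodE3 {n m : ℕ} (a b c i : Fin n) :
    (X a : MvPolynomial (Fin n) ℂ) * X b * X c * X i ^ (m - 2) = monomial (E3 m a b c i) 1 := by
  rw [X_pow_eq_monomial, X, X, X, monomial_mul, monomial_mul, monomial_mul,
    one_mul, one_mul, one_mul]; rfl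

private lemma prodW {n m : ℕ} (a b : Fin n) :
    (X a : MvPolynomial (Fin n) ℂ) * X b ^ m
      = monomial (Finsupp.single a 1 + Finsupp.single b m) 1 := by
  rw [X_pow_eq_monomial, X, monomial_mul, one_mul]

private lemma three_le_card {n : ℕ} {e : Fin n →₀ ℕ} {a b c : Fin n}
    (hab : a ≠ b) (hac : a ≠ c) (hbc : b ≠ c)
    (ha : e a ≠ 0) (hb : e b ≠ 0) (hc : e c ≠ 0) : 3 ≤ e.support.card := by
  have hsub : ({a, b, c} : Finset (Fin n)) ⊆ e.support := by
    intro x hx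
    rw [Finset.mem_insert, Finset.mem_insert, Finset.mem_singleton] at hx
    rcases hx with rfl | rfl | rfl <;> simpa [Finsupp.mem_support_iff]
  have hcard : ({a, b, c} : Finset (Fin n)).card = 3 := by
    rw [Finset.card_insert_of_notMem (by simp [hab, hac]),
      Finset.card_insert_of_notMem (by simp [hbc]), Finset.card_singleton]
  have := Finset.card_le_card hsub
  omega

private lemma Winj {n m : ℕ} (hm : 3 ≤ m) :
    Function.Injective (fun p : Fin n × Fin n =>
      Finsupp.single p.1 1 + Finsupp.single p.2 m) := by
  rintro ⟨i, j⟩ ⟨i', j'⟩ h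
  simp only at h
  have h1 := DFunLike.congr_fun h i
  have h2 := DFunLike.congr_fun h j
  simp only [Finsupp.add_apply, Finsupp.single_apply, Fin.ext_iff] at h1 h2
  have : i.1 = i'.1 ∧ j.1 = j'.1 := by split_ifs at h1 h2 <;> omega
  exact Prod.ext (Fin.ext this.1) (Fin.ext this.2)

private lemma monomial_li (n : ℕ) :
    LinearIndependent ℂ (fun s : Fin n →₀ ℕ => (monomial s (1 : ℂ) : MvPolynomial (Fin n) ℂ)) := by
  have h := (basisMonomials (Fin n) ℂ).linearIndependent
  rwa [coe_basisMonomials] at h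

set_option maxHeartbeats 1000000 in
/-- For `n ≥ 4`, `m ≥ 3`: inside the homogeneous polynomials of degree `m+1` in
`z_1,…,z_n`, the space `V` spanned by
`z_2 z_3 S, z_1 z_3 S, z_1 z_2 S` (where `S = z_4^{m-1}+⋯+z_n^{m-1}`) and
`z_1 z_2 z_3 z_i^{m-2}` for `4 ≤ i ≤ n` has dimension `n`, the space `W` spanned by all
`z_i z_j^m` has dimension `n^2`, and `V ∩ W = 0`. (Indices are 0-based: `z_k = X ⟨k-1⟩`.) -/
theorem stmt10 (n m : ℕ) (hn : 4 ≤ n) (hm : 3 ≤ m) (hmn : m + 1 ≤ n) :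
    let S : MvPolynomial (Fin n) ℂ :=
      ∑ j : Fin n, if 3 ≤ j.1 then MvPolynomial.X j ^ (m - 1) else 0
    let z0 : Fin n := ⟨0, by omega⟩
    let z1 : Fin n := ⟨1, by omega⟩
    let z2 : Fin n := ⟨2, by omega⟩
    let V : Submodule ℂ (MvPolynomial (Fin n) ℂ) :=
      Submodule.span ℂ (Set.range fun i : Fin n =>
        if i.1 = 0 then MvPolynomial.X z1 * MvPolynomial.X z2 * S
        else if i.1 = 1 then MvPolynomial.X z0 * MvPolynomial.X z2 * S
        else if i.1 = 2 then MvPolynomial.X z0 * MvPolynomial.X z1 * S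
        else MvPolynomial.X z0 * MvPolynomial.X z1 * MvPolynomial.X z2 *
          MvPolynomial.X i ^ (m - 2))
    let W : Submodule ℂ (MvPolynomial (Fin n) ℂ) :=
      Submodule.span ℂ (Set.range fun p : Fin n × Fin n =>
        MvPolynomial.X p.1 * MvPolynomial.X p.2 ^ m)
    Module.finrank ℂ ↥V = n ∧ Module.finrank ℂ ↥W = n ^ 2 ∧ V ⊓ W = ⊥ := by
  intro S z0 z1 z2 V W
  have h3n : (3 : ℕ) < n := by omega
  set z3 : Fin n := ⟨3, h3n⟩ with hz3def
  have hz0 : z0.1 = 0 := rfl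
  have hz1 : z1.1 = 1 := rfl
  have hz2 : z2.1 = 2 := rfl
  have hz3 : z3.1 = 3 := rfl
  set vf : Fin n → MvPolynomial (Fin n) ℂ := fun i : Fin n =>
    if i.1 = 0 then X z1 * X z2 * S
    else if i.1 = 1 then X z0 * X z2 * S
    else if i.1 = 2 then X z0 * X z1 * S
    else X z0 * X z1 * X z2 * X i ^ (m - 2) with hvf
  have hV : V = Submodule.span ℂ (Set.range vf) := rfl
  set wf : Fin n × Fin n → MvPolynomial (Fin n) ℂ := fun p => X p.1 * X p.2 ^ m with hwf
  have hW : W = Submodule.span ℂ (Set.range wf) := rfl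
  -- expansion of the products with S
  have hprod : ∀ a b : Fin n, (X a : MvPolynomial (Fin n) ℂ) * X b * S
      = ∑ j : Fin n, if 3 ≤ j.1 then (monomial (E2 m a b j) (1 : ℂ)) else 0 := by
    intro a b
    show (X a : MvPolynomial (Fin n) ℂ) * X b *
        (∑ j : Fin n, if 3 ≤ j.1 then X j ^ (m - 1) else 0) = _
    rw [Finset.mul_sum]
    refine Finset.sum_congr rfl fun j _ => ?_
    split_ifs
    · exact prodE2 a b j
    · exact mul_zero _
  -- branch values of vf
  have hvf0 : ∀ i : Fin n, i.1 = 0 → vf i = X z1 * X z2 * S := by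
    intro i hi; simp only [hvf]; rw [if_pos hi]
  have hvf1 : ∀ i : Fin n, i.1 = 1 → vf i = X z0 * X z2 * S := by
    intro i hi; simp only [hvf]; rw [if_neg (by omega), if_pos hi]
  have hvf2 : ∀ i : Fin n, i.1 = 2 → vf i = X z0 * X z1 * S := by
    intro i hi; simp only [hvf]; rw [if_neg (by omega), if_neg (by omega), if_pos hi]
  have hvf3 : ∀ i : Fin n, 3 ≤ i.1 → vf i = X z0 * X z1 * X z2 * X i ^ (m - 2) := by
    intro i hi; simp only [hvf]
    rw [if_neg (by omega), if_neg (by omega), if_neg (by omega)]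
  -- target exponents
  set d : Fin n → (Fin n →₀ ℕ) := fun k =>
    if k.1 = 0 then E2 m z1 z2 z3
    else if k.1 = 1 then E2 m z0 z2 z3
    else if k.1 = 2 then E2 m z0 z1 z3
    else E3 m z0 z1 z2 k with hd
  have hd0 : ∀ k : Fin n, k.1 = 0 → d k = E2 m z1 z2 z3 := by
    intro k hk; simp only [hd]; rw [if_pos hk]
  have hd1 : ∀ k : Fin n, k.1 = 1 → d k = E2 m z0 z2 z3 := by
    intro k hk; simp only [hd]; rw [if_neg (by omega), if_pos hk]
  have hd2 : ∀ k : Fin n, k.1 = 2 → d k = E2 m z0 z1 z3 := by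
    intro k hk; simp only [hd]; rw [if_neg (by omega), if_neg (by omega), if_pos hk]
  have hd3 : ∀ k : Fin n, 3 ≤ k.1 → d k = E3 m z0 z1 z2 k := by
    intro k hk; simp only [hd]
    rw [if_neg (by omega), if_neg (by omega), if_neg (by omega)]
  -- the key coefficient computation
  have zsum : ∀ (a b : Fin n) (D : Fin n →₀ ℕ), (∀ j : Fin n, 3 ≤ j.1 → E2 m a b j ≠ D) →
      coeff D (∑ j : Fin n, if 3 ≤ j.1 then (monomial (E2 m a b j) (1 : ℂ)) else 0) = 0 := by
    intro a b D hD
    rw [coeff_sum]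
    refine Finset.sum_eq_zero fun j _ => ?_
    split_ifs with h3j
    · rw [coeff_monomial, if_neg (hD j h3j)]
    · exact coeff_zero _
  have hneE2 : ∀ a b : Fin n, ∀ j : Fin n, 3 ≤ j.1 → j ≠ z3 → E2 m a b j ≠ E2 m a b z3 := by
    intro a b j h3j hj
    have hj3 : j.1 ≠ 3 := fun h => hj (Fin.ext h)
    refine finsupp_ne j ?_
    simp only [E2_apply, Fin.ext_iff, hz3]
    split_ifs <;> first | omega | exact absurd ‹False› not_false
  have osum : ∀ (a b : Fin n),
      coeff (E2 m a b z3) (∑ j : Fin n, if 3 ≤ j.1 then (monomial (E2 m a b j) (1 : ℂ)) else 0)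
        = 1 := by
    intro a b
    rw [coeff_sum, Finset.sum_eq_single_of_mem z3 (Finset.mem_univ z3)]
    · rw [if_pos (by omega : 3 ≤ z3.1), coeff_monomial, if_pos rfl]
    · intro j _ hj
      split_ifs with h3j
      · rw [coeff_monomial, if_neg (hneE2 a b j h3j hj)]
      · exact coeff_zero _
  have key : ∀ k i : Fin n, coeff (d k) (vf i) = if k = i then 1 else 0 := by
    intro k i
    by_cases hi0 : i.1 = 0
    · rw [hvf0 i hi0, hprod]
      by_cases hk0 : k.1 = 0
      · rw [hd0 k hk0, if_pos (Fin.ext (by omega) : k = i)]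
        exact osum z1 z2
      rw [if_neg (show k ≠ i from fin_ne (by omega))]
      by_cases hk1 : k.1 = 1
      · rw [hd1 k hk1]
        refine zsum _ _ _ fun j h3j => finsupp_ne z0 ?_
        simp only [E2_apply, Fin.ext_iff, hz0, hz1, hz2, hz3]
        split_ifs <;> first | omega | exact absurd ‹False› not_false
      by_cases hk2 : k.1 = 2
      · rw [hd2 k hk2]
        refine zsum _ _ _ fun j h3j => finsupp_ne z0 ?_
        simp only [E2_apply, Fin.ext_iff, hz0, hz1, hz2, hz3]
        split_ifs <;> first | omega | exact absurd ‹False› not_false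
      · rw [hd3 k (by omega)]
        refine zsum _ _ _ fun j h3j => finsupp_ne z0 ?_
        simp only [E2_apply, E3_apply, Fin.ext_iff, hz0, hz1, hz2, hz3]
        split_ifs <;> first | omega | exact absurd ‹False› not_false
    by_cases hi1 : i.1 = 1
    · rw [hvf1 i hi1, hprod]
      by_cases hk0 : k.1 = 0
      · rw [hd0 k hk0, if_neg (show k ≠ i from fin_ne (by omega))]
        refine zsum _ _ _ fun j h3j => finsupp_ne z1 ?_
        simp only [E2_apply, Fin.ext_iff, hz0, hz1, hz2, hz3]
        split_ifs <;> first | omega | exact absurd ‹False› not_false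
      by_cases hk1 : k.1 = 1
      · rw [hd1 k hk1, if_pos (Fin.ext (by omega) : k = i)]
        exact osum z0 z2
      rw [if_neg (show k ≠ i from fin_ne (by omega))]
      by_cases hk2 : k.1 = 2
      · rw [hd2 k hk2]
        refine zsum _ _ _ fun j h3j => finsupp_ne z2 ?_
        simp only [E2_apply, Fin.ext_iff, hz0, hz1, hz2, hz3]
        split_ifs <;> first | omega | exact absurd ‹False› not_false
      · rw [hd3 k (by omega)]
        refine zsum _ _ _ fun j h3j => finsupp_ne z1 ?_
        simp only [E2_apply, E3_apply, Fin.ext_iff, hz0, hz1, hz2, hz3]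
        split_ifs <;> first | omega | exact absurd ‹False› not_false
    by_cases hi2 : i.1 = 2
    · rw [hvf2 i hi2, hprod]
      by_cases hk0 : k.1 = 0
      · rw [hd0 k hk0, if_neg (show k ≠ i from fin_ne (by omega))]
        refine zsum _ _ _ fun j h3j => finsupp_ne z0 ?_
        simp only [E2_apply, Fin.ext_iff, hz0, hz1, hz2, hz3]
        split_ifs <;> first | omega | exact absurd ‹False› not_false
      by_cases hk1 : k.1 = 1
      · rw [hd1 k hk1, if_neg (show k ≠ i from fin_ne (by omega))]
        refine zsum _ _ _ fun j h3j => finsupp_ne z1 ?_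
        simp only [E2_apply, Fin.ext_iff, hz0, hz1, hz2, hz3]
        split_ifs <;> first | omega | exact absurd ‹False› not_false
      by_cases hk2 : k.1 = 2
      · rw [hd2 k hk2, if_pos (Fin.ext (by omega) : k = i)]
        exact osum z0 z1
      · rw [hd3 k (by omega), if_neg (show k ≠ i from fin_ne (by omega))]
        refine zsum _ _ _ fun j h3j => finsupp_ne z2 ?_
        simp only [E2_apply, E3_apply, Fin.ext_iff, hz0, hz1, hz2, hz3]
        split_ifs <;> first | omega | exact absurd ‹False› not_false
    · -- i ≥ 3
      have hi3 : 3 ≤ i.1 := by omega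
      rw [hvf3 i hi3, prodE3, coeff_monomial]
      by_cases hk0 : k.1 = 0
      · rw [hd0 k hk0, if_neg (show k ≠ i from fin_ne (by omega))]
        refine if_neg (finsupp_ne z0 ?_)
        simp only [E2_apply, E3_apply, Fin.ext_iff, hz0, hz1, hz2, hz3]
        split_ifs <;> first | omega | exact absurd ‹False› not_false
      by_cases hk1 : k.1 = 1
      · rw [hd1 k hk1, if_neg (show k ≠ i from fin_ne (by omega))]
        refine if_neg (finsupp_ne z1 ?_)
        simp only [E2_apply, E3_apply, Fin.ext_iff, hz0, hz1, hz2, hz3]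
        split_ifs <;> first | omega | exact absurd ‹False› not_false
      by_cases hk2 : k.1 = 2
      · rw [hd2 k hk2, if_neg (show k ≠ i from fin_ne (by omega))]
        refine if_neg (finsupp_ne z2 ?_)
        simp only [E2_apply, E3_apply, Fin.ext_iff, hz0, hz1, hz2, hz3]
        split_ifs <;> first | omega | exact absurd ‹False› not_false
      · rw [hd3 k (by omega)]
        by_cases hki : k = i
        · subst hki
          rw [if_pos rfl, if_pos rfl]
        · have hki' : k.1 ≠ i.1 := fun h => hki (Fin.ext h)
          rw [if_neg hki, if_neg ?_]
          refine finsupp_ne i ?_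
          simp only [E3_apply, Fin.ext_iff, hz0, hz1, hz2]
          split_ifs <;> first | omega | exact absurd ‹False› not_false
  -- linear independence of vf
  have hliV : LinearIndependent ℂ vf := by
    rw [Fintype.linearIndependent_iff]
    intro g hg k
    have h := congrArg (coeff (d k)) hg
    simp only [coeff_sum, coeff_smul, key, smul_eq_mul, mul_ite, mul_one, mul_zero,
      coeff_zero, Finset.sum_ite_eq, Finset.mem_univ, if_true] at h
    exact h
  -- linear independence of wf
  have hwmono : ∀ p : Fin n × Fin n,
      wf p = monomial (Finsupp.single p.1 1 + Finsupp.single p.2 m) (1 : ℂ) := by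
    intro p; simp only [hwf]; exact prodW p.1 p.2
  have hliW : LinearIndependent ℂ wf := by
    have : wf = (fun s : Fin n →₀ ℕ => (monomial s (1 : ℂ) : MvPolynomial (Fin n) ℂ)) ∘
        (fun p : Fin n × Fin n => Finsupp.single p.1 1 + Finsupp.single p.2 m) :=
      funext hwmono
    rw [this]
    exact (monomial_li n).comp _ (Winj hm)
  refine ⟨?_, ?_, ?_⟩
  · rw [hV, finrank_span_eq_card hliV, Fintype.card_fin]
  · rw [hW, finrank_span_eq_card hliW]
    simp [sq]
  · -- disjointness
    set A : Set (Fin n →₀ ℕ) := {e | 3 ≤ e.support.card} with hA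
    have hVA : V ≤ Submodule.span ℂ
        ((fun s : Fin n →₀ ℕ => (monomial s (1 : ℂ) : MvPolynomial (Fin n) ℂ)) '' A) := by
      rw [hV]
      refine Submodule.span_le.mpr ?_
      rintro _ ⟨i, rfl⟩
      have memE2 : ∀ a b : Fin n, a.1 < 3 → b.1 < 3 → a ≠ b →
          (X a : MvPolynomial (Fin n) ℂ) * X b * S ∈ Submodule.span ℂ
            ((fun s : Fin n →₀ ℕ => (monomial s (1 : ℂ) : MvPolynomial (Fin n) ℂ)) '' A) := by
        intro a b ha hb hab
        rw [hprod]
        refine Submodule.sum_mem _ fun j _ => ?_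
        split_ifs with h3j
        · refine Submodule.subset_span ⟨E2 m a b j, ?_, rfl⟩
          have hab' : a.1 ≠ b.1 := fun h => hab (Fin.ext h)
          refine three_le_card (a := a) (b := b) (c := j)
            hab (fin_ne (by omega)) (fin_ne (by omega)) ?_ ?_ ?_ <;>
            · simp only [E2_apply, Fin.ext_iff]
              split_ifs <;> first | omega | exact absurd ‹False› not_false
        · exact Submodule.zero_mem _
      by_cases hi0 : i.1 = 0
      · rw [hvf0 i hi0]; exact memE2 z1 z2 (by omega) (by omega) (fin_ne (by omega))
      by_cases hi1 : i.1 = 1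
      · rw [hvf1 i hi1]; exact memE2 z0 z2 (by omega) (by omega) (fin_ne (by omega))
      by_cases hi2 : i.1 = 2
      · rw [hvf2 i hi2]; exact memE2 z0 z1 (by omega) (by omega) (fin_ne (by omega))
      · rw [hvf3 i (by omega), prodE3]
        refine Submodule.subset_span ⟨E3 m z0 z1 z2 i, ?_, rfl⟩
        refine three_le_card (a := z0) (b := z1) (c := z2)
          (fin_ne (by omega)) (fin_ne (by omega)) (fin_ne (by omega)) ?_ ?_ ?_ <;>
          · simp only [E3_apply, Fin.ext_iff, hz0, hz1, hz2]
            split_ifs <;> first | omega | exact absurd ‹False› not_false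
    have hWB : W ≤ Submodule.span ℂ
        ((fun s : Fin n →₀ ℕ => (monomial s (1 : ℂ) : MvPolynomial (Fin n) ℂ)) '' Aᶜ) := by
      rw [hW]
      refine Submodule.span_le.mpr ?_
      rintro _ ⟨p, rfl⟩
      rw [hwmono]
      refine Submodule.subset_span ⟨_, ?_, rfl⟩
      simp only [Set.mem_compl_iff, hA, Set.mem_setOf_eq, not_le]
      have hsub : (Finsupp.single p.1 1 + Finsupp.single p.2 m).support ⊆ {p.1, p.2} := by
        refine Finsupp.support_add.trans ?_
        refine Finset.union_subset ?_ ?_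
        · exact Finsupp.support_single_subset.trans (by intro x hx; simp_all)
        · exact Finsupp.support_single_subset.trans (by intro x hx; simp_all)
      have h1 := Finset.card_le_card hsub
      have h2 : ({p.1, p.2} : Finset (Fin n)).card ≤ 2 :=
        (Finset.card_insert_le _ _).trans (by simp)
      omega
    have hdis := (monomial_li n).disjoint_span_image
      (s := A) (t := Aᶜ) disjoint_compl_right
    exact disjoint_iff.mp (hdis.mono hVA hWB)
end

section
/- Let $n \geq 3$ and $2 \leq m \leq n-1$. Let $b_k(z_1,\ldots,z_n)$ be homogeneous of degree $k$ for $m+1 \leq k \leq 2m$, and set $f(t_0,\ldots,t_n) = t_0^{2m} + t_0^{m-1} b_{m+1}(t_1,\ldots,t_n) + t_0^{m-2} b_{m+2}(t_1,\ldots,t_n) + \cdots + b_{2m}(t_1,\ldots,t_n)$. If (i) the affine hypersurface $\{1 + b_{m+1}(t) + \cdots + b_{2m}(t) = 0\} \subset \mathbb{C}^n$ is smooth, and (ii) the projective hypersurface $\{b_{2m} = 0\} \subset \mathbb{P}^{n-1}$ is smooth, then the projective hypersurface $Y = \{f = 0\} \subset \mathbb{P}^n$ is smooth. -/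
/-!
Write `g = 1 + ∑ b_k`, so that `f(t₀, z) = t₀^{2m} g(z / t₀)` is the homogenization of `g`.
On the chart `t₀ ≠ 0`, homogeneity of the `b_k` (and of their partials) gives
`f(t₀, t₀ u) = t₀^{2m} g(u)` and `∂f/∂z_j (t₀, t₀ u) = t₀^{2m-1} ∂g/∂z_j (u)`, so a singular point
of `Y` there is a singular point of the affine hypersurface `g = 0`. At infinity every term
except `b_{2m}` carries a positive power of `t₀`, so `f(0, z) = b_{2m}(z)` and
`∂f/∂z_j (0, z) = ∂b_{2m}/∂z_j (z)`, and a singular point there is one of `b_{2m} = 0`.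
The partial derivative in `t₀` is never needed.
-/

open MvPolynomial Finset

namespace MvPolynomial

variable {R : Type*} [CommSemiring R]

theorem IsHomogeneous.eval_smul {σ : Type*} {φ : MvPolynomial σ R} {k : ℕ}
    (h : φ.IsHomogeneous k) (c : R) (x : σ → R) :
    eval (c • x) φ = c ^ k * eval x φ := by
  rw [eval_eq, eval_eq, Finset.mul_sum]
  refine Finset.sum_congr rfl fun d hd => ?_
  simp only [Pi.smul_apply, smul_eq_mul, mul_pow, Finset.prod_mul_distrib,
    Finset.prod_pow_eq_pow_sum, ← h.degree_eq_sum_deg_support hd]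
  ring

theorem sum_zero_pow_tsub_mul {s : Finset ℕ} {d : ℕ} (hd : d ∈ s) (hs : ∀ k ∈ s, k ≤ d)
    (a : ℕ → R) : ∑ k ∈ s, (0 : R) ^ (d - k) * a k = a d := by
  rw [Finset.sum_eq_single_of_mem d hd fun k hk hkd => ?_]
  · simp
  · rw [zero_pow (by have := hs k hk; omega), zero_mul]

variable {n : ℕ}

noncomputable def homogenization (d : ℕ) (s : Finset ℕ) (b : ℕ → MvPolynomial (Fin n) R) :
    MvPolynomial (Fin (n + 1)) R :=
  X 0 ^ d + ∑ k ∈ s, X 0 ^ (d - k) * rename Fin.succ (b k)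

variable (d : ℕ) (s : Finset ℕ) (b : ℕ → MvPolynomial (Fin n) R)

theorem eval_cons_homogenization (c : R) (z : Fin n → R) :
    eval (Fin.cons c z) (homogenization d s b) =
      c ^ d + ∑ k ∈ s, c ^ (d - k) * eval z (b k) := by
  simp only [homogenization, map_add, map_sum, map_mul, map_pow, eval_X, eval_rename]
  rfl

theorem eval_cons_pderiv_succ_homogenization (c : R) (z : Fin n → R) (j : Fin n) :
    eval (Fin.cons c z) (pderiv j.succ (homogenization d s b)) =
      ∑ k ∈ s, c ^ (d - k) * eval z (pderiv j (b k)) := by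
  simp only [homogenization, map_add, map_sum, pderiv_mul, pderiv_pow,
    pderiv_X_of_ne (Fin.succ_ne_zero j).symm, mul_zero, zero_mul, zero_add,
    pderiv_rename (Fin.succ_injective n), map_mul, map_pow, eval_X, eval_rename]
  rfl

variable {d s b}

theorem eval_cons_smul_homogenization (hb : ∀ k ∈ s, (b k).IsHomogeneous k)
    (hs : ∀ k ∈ s, k ≤ d) (c : R) (u : Fin n → R) :
    eval (Fin.cons c (c • u)) (homogenization d s b) = c ^ d * eval u (1 + ∑ k ∈ s, b k) := by
  rw [eval_cons_homogenization, map_add, map_one, map_sum, mul_add, mul_one, Finset.mul_sum]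
  refine congrArg _ (Finset.sum_congr rfl fun k hk => ?_)
  rw [(hb k hk).eval_smul, ← mul_assoc, ← pow_add, Nat.sub_add_cancel (hs k hk)]

theorem eval_cons_smul_pderiv_succ_homogenization (hb : ∀ k ∈ s, (b k).IsHomogeneous k)
    (hs : s ⊆ Icc 1 d) (c : R) (u : Fin n → R) (j : Fin n) :
    eval (Fin.cons c (c • u)) (pderiv j.succ (homogenization d s b)) =
      c ^ (d - 1) * eval u (pderiv j (1 + ∑ k ∈ s, b k)) := by
  rw [eval_cons_pderiv_succ_homogenization, map_add, pderiv_one, zero_add, map_sum, map_sum,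
    Finset.mul_sum]
  refine Finset.sum_congr rfl fun k hk => ?_
  have hk' := mem_Icc.mp (hs hk)
  rw [((hb k hk).pderiv).eval_smul, ← mul_assoc, ← pow_add]
  congr 2
  omega

theorem eval_zero_cons_homogenization (hd : d ∈ s) (hs : ∀ k ∈ s, k ≤ d) (hd0 : d ≠ 0)
    (z : Fin n → R) :
    eval (Fin.cons 0 z) (homogenization d s b) = eval z (b d) := by
  rw [eval_cons_homogenization, sum_zero_pow_tsub_mul hd hs, zero_pow hd0, zero_add]

theorem eval_zero_cons_pderiv_succ_homogenization (hd : d ∈ s) (hs : ∀ k ∈ s, k ≤ d)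
    (z : Fin n → R) (j : Fin n) :
    eval (Fin.cons 0 z) (pderiv j.succ (homogenization d s b)) = eval z (pderiv j (b d)) := by
  rw [eval_cons_pderiv_succ_homogenization, sum_zero_pow_tsub_mul hd hs]

section Smoothness

variable {σ K : Type*} [Field K]

def IsSmoothAffineHypersurface (g : MvPolynomial σ K) : Prop :=
  ∀ t : σ → K, eval t g = 0 → ∃ i, eval t (pderiv i g) ≠ 0

def IsSmoothProjectiveHypersurface (g : MvPolynomial σ K) : Prop :=
  ∀ t : σ → K, t ≠ 0 → ¬ (eval t g = 0 ∧ ∀ i, eval t (pderiv i g) = 0)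

variable {n d : ℕ} {s : Finset ℕ} {b : ℕ → MvPolynomial (Fin n) K}

theorem isSmoothProjectiveHypersurface_homogenization (hb : ∀ k ∈ s, (b k).IsHomogeneous k)
    (hs : s ⊆ Icc 1 d) (hd : d ∈ s)
    (h_affine : IsSmoothAffineHypersurface (1 + ∑ k ∈ s, b k))
    (h_infinity : IsSmoothProjectiveHypersurface (b d)) :
    IsSmoothProjectiveHypersurface (homogenization d s b) := by
  have hs_le : ∀ k ∈ s, k ≤ d := fun k hk => (mem_Icc.mp (hs hk)).2
  have hd0 : d ≠ 0 := Nat.one_le_iff_ne_zero.mp (mem_Icc.mp (hs hd)).1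
  rintro t ht ⟨hf, hpderiv⟩
  rw [← Fin.cons_self_tail t] at ht hf hpderiv
  set c := t 0
  set z := Fin.tail t
  by_cases hc : c = 0
  · rw [hc] at ht hf hpderiv
    refine h_infinity z (fun hz => ht (hz ▸ Matrix.cons_zero_zero)) ⟨?_, fun j => ?_⟩
    · rwa [eval_zero_cons_homogenization hd hs_le hd0] at hf
    · rw [← eval_zero_cons_pderiv_succ_homogenization hd hs_le]
      exact hpderiv j.succ
  · have hz : z = c • c⁻¹ • z := (smul_inv_smul₀ hc z).symm
    rw [hz] at hf hpderiv
    rw [eval_cons_smul_homogenization hb hs_le] at hf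
    obtain ⟨j, hj⟩ := h_affine _ ((mul_eq_zero.mp hf).resolve_left (pow_ne_zero _ hc))
    have hj_succ := hpderiv j.succ
    rw [eval_cons_smul_pderiv_succ_homogenization hb hs] at hj_succ
    exact hj ((mul_eq_zero.mp hj_succ).resolve_left (pow_ne_zero _ hc))

end Smoothness

end MvPolynomial

theorem stmt15_general (n m : ℕ) (hm : 2 ≤ m)
    (b : ℕ → MvPolynomial (Fin n) ℂ)
    (hb : ∀ k ∈ Finset.Icc (m + 1) (2 * m), (b k).IsHomogeneous k)
    (hi : ∀ t : Fin n → ℂ,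
      MvPolynomial.eval t (1 + ∑ k ∈ Finset.Icc (m + 1) (2 * m), b k) = 0 →
      ∃ i, MvPolynomial.eval t
        (MvPolynomial.pderiv i (1 + ∑ k ∈ Finset.Icc (m + 1) (2 * m), b k)) ≠ 0)
    (hii : ∀ z : Fin n → ℂ, z ≠ 0 →
      ¬ (MvPolynomial.eval z (b (2 * m)) = 0 ∧
        ∀ i, MvPolynomial.eval z (MvPolynomial.pderiv i (b (2 * m))) = 0)) :
    let f : MvPolynomial (Fin (n + 1)) ℂ :=
      MvPolynomial.X 0 ^ (2 * m) + ∑ k ∈ Finset.Icc (m + 1) (2 * m),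
        MvPolynomial.X 0 ^ (2 * m - k) * MvPolynomial.rename Fin.succ (b k)
    ∀ t : Fin (n + 1) → ℂ, t ≠ 0 →
      ¬ (MvPolynomial.eval t f = 0 ∧
        ∀ i, MvPolynomial.eval t (MvPolynomial.pderiv i f) = 0) :=
  isSmoothProjectiveHypersurface_homogenization hb
    (Finset.Icc_subset_Icc (by omega) le_rfl) (Finset.right_mem_Icc.mpr (by omega)) hi hii

/-- Let `b_k` be homogeneous of degree `k` for `m+1 ≤ k ≤ 2m`, and set
`f = t_0^{2m} + t_0^{m-1} b_{m+1} + ⋯ + b_{2m}`. If (i) the affine hypersurface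
`{1 + b_{m+1}(t) + ⋯ + b_{2m}(t) = 0} ⊂ ℂ^n` is smooth and (ii) the projective
hypersurface `{b_{2m} = 0} ⊂ ℙ^{n-1}` is smooth, then `Y = {f = 0} ⊂ ℙ^n` is smooth
(no common nontrivial zero of `f` and all its partials). -/
theorem stmt15 (n m : ℕ) (hn : 3 ≤ n) (hm : 2 ≤ m) (hmn : m ≤ n - 1)
    (b : ℕ → MvPolynomial (Fin n) ℂ)
    (hb : ∀ k ∈ Finset.Icc (m + 1) (2 * m), (b k).IsHomogeneous k)
    (hi : ∀ t : Fin n → ℂ,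
      MvPolynomial.eval t (1 + ∑ k ∈ Finset.Icc (m + 1) (2 * m), b k) = 0 →
      ∃ i, MvPolynomial.eval t
        (MvPolynomial.pderiv i (1 + ∑ k ∈ Finset.Icc (m + 1) (2 * m), b k)) ≠ 0)
    (hii : ∀ z : Fin n → ℂ, z ≠ 0 →
      ¬ (MvPolynomial.eval z (b (2 * m)) = 0 ∧
        ∀ i, MvPolynomial.eval z (MvPolynomial.pderiv i (b (2 * m))) = 0)) :
    let f : MvPolynomial (Fin (n + 1)) ℂ :=
      MvPolynomial.X 0 ^ (2 * m) + ∑ k ∈ Finset.Icc (m + 1) (2 * m),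
        MvPolynomial.X 0 ^ (2 * m - k) * MvPolynomial.rename Fin.succ (b k)
    ∀ t : Fin (n + 1) → ℂ, t ≠ 0 →
      ¬ (MvPolynomial.eval t f = 0 ∧
        ∀ i, MvPolynomial.eval t (MvPolynomial.pderiv i f) = 0) :=
  stmt15_general n m hm b hb hi hii
end

section
/- Let $f$ be homogeneous of degree $2m$ in $t_0,\ldots,t_n$, written $f = \sum_{k=0}^{2m} t_0^{2m-k} f_k(t_1,\ldots,t_n)$, and assume $f_0 = 1$ and $f_1 = \cdots = f_m = 0$. Define, for $y$ near $0$ in $\mathbb{C}^n$, $B_{m+1}^f(y;z) = \frac{a_{m+1}^f(y;z)}{a_0^f(y;z)} - A_{m+1}\!\left(\frac{a_1^f(y;z)}{a_0^f(y;z)},\ldots,\frac{a_m^f(y;z)}{a_0^f(y;z)}\right)$, where $a_k^f$ are the $\lambda$-expansion coefficients of $f(1,y+\lambda z)$ and $A_{m+1}$ is the weighted homogeneous polynomial of weighted degree $m+1$ characterizing ECO polynomials. Then $B_{m+1}^f(0;z) = f_{m+1}(z)$ and $\frac{\partial B_{m+1}^f}{\partial y_i}(0;z) = \frac{\partial f_{m+2}}{\partial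 t_i}(z)$ for all $i = 1,\ldots,n$. -/
/-!
Write `a_k(y; z)` for the coefficient of `λ^k` in `f(1, y + λz) = ∑_j f_j(y + λz)`. At `y = 0`
homogeneity gives `a_k(0; z) = f_k(z)`, so `a_0 = 1` and `a_1 = ⋯ = a_m = 0`: the arguments of
`A_{m+1}` vanish at `y = 0`, and since the weighted degree `m + 1` of `A_{m+1}` exceeds every
weight, `A_{m+1}` has neither constant nor linear part. So `A_{m+1}` contributes nothing to
`B(0; z)` nor to its first derivative. Differentiating in `y_i` commutes with taking
`λ`-coefficients, so `∂a_k/∂y_i(0; z) = ∂f_{k+1}/∂t_i(z)`; as `f_1 = 0`, the quotient rule gives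
`∂(a_{m+1}/a_0)/∂y_i(0; z) = ∂f_{m+2}/∂t_i(z)`.
-/

open Polynomial Finset

namespace MvPolynomial

theorem IsWeightedHomogeneous.eval_zero {R M σ : Type*} [CommSemiring R] [AddCommMonoid M]
    {w : σ → M} {n : M} {φ : MvPolynomial σ R} (hφ : φ.IsWeightedHomogeneous w n) (hn : n ≠ 0) :
    eval 0 φ = 0 := by
  rw [MvPolynomial.eval_zero, constantCoeff_eq]
  exact hφ.coeff_eq_zero 0 (by simpa using hn.symm)

theorem IsHomogeneous.aeval_C_mul_X {R σ : Type*} [CommSemiring R] {p : MvPolynomial σ R}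
    {d : ℕ} (hp : p.IsHomogeneous d) (z : σ → R) :
    MvPolynomial.aeval (fun j => Polynomial.C (z j) * Polynomial.X) p =
      Polynomial.C (eval z p) * Polynomial.X ^ d := by
  conv_lhs => rw [p.as_sum]
  conv_rhs => rw [p.as_sum]
  simp only [map_sum, Finset.sum_mul]
  refine Finset.sum_congr rfl fun v hv => ?_
  have hdeg : v.degree = d := by
    rw [Finsupp.degree_eq_weight_one]; exact hp (mem_support_iff.mp hv)
  rw [aeval_monomial, eval_monomial, Finsupp.prod, Finsupp.prod, ← hdeg, Finsupp.degree_apply,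
    ← Finset.prod_pow_eq_pow_sum]
  simp [mul_pow, Finset.prod_mul_distrib, mul_assoc]

theorem aeval_cons_one_sum_X_zero_pow_mul_rename {R S : Type*} [CommSemiring R]
    [CommSemiring S] [Algebra R S] {n : ℕ} (g : Fin n → S) (s : Finset ℕ) (e : ℕ → ℕ)
    (q : ℕ → MvPolynomial (Fin n) R) :
    aeval (Fin.cons 1 g) (∑ k ∈ s, X 0 ^ e k * rename Fin.succ (q k)) = aeval g (∑ k ∈ s, q k) := by
  simp [aeval_rename]

end MvPolynomial

theorem Derivation.map_aeval_mvPolynomial {R A M σ : Type*} [CommSemiring R] [CommSemiring A]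
    [Algebra R A] [AddCommMonoid M] [Module A M] [Module R M] [IsScalarTower R A M] [Fintype σ]
    (D : Derivation R A M) (g : σ → A) (p : MvPolynomial σ R) :
    D (MvPolynomial.aeval g p) = ∑ j, MvPolynomial.aeval g (MvPolynomial.pderiv j p) • D (g j) := by
  classical
  induction p using MvPolynomial.induction_on with
  | C c => simp
  | add p q hp hq => simp [hp, hq, add_smul, Finset.sum_add_distrib]
  | mul_X p j hp =>
    simp [hp, MvPolynomial.pderiv_X, Pi.single_apply, add_smul, Finset.sum_add_distrib,
      Finset.smul_sum, mul_smul, smul_comm (g j), apply_ite, ite_smul]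

theorem Polynomial.hasDerivAt_coeff_eval_C {𝕜 : Type*} [NontriviallyNormedField 𝕜]
    (Q : 𝕜[X][X]) (k : ℕ) (x : 𝕜) :
    HasDerivAt (fun s => (Q.eval (C s)).coeff k) (((derivative Q).eval (C x)).coeff k) x := by
  induction Q using Polynomial.induction_on' with
  | add p q hp hq => simpa using hp.fun_add hq
  | monomial n a =>
    simp only [eval_monomial, derivative_monomial, ← C_pow, coeff_mul_C, coeff_mul_natCast]
    simpa [mul_assoc] using (hasDerivAt_pow n x).const_mul (a.coeff k)

namespace MvPolynomial

variable {σ 𝕜 : Type*} [NontriviallyNormedField 𝕜]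

theorem hasDerivAt_eval [Fintype σ] (p : MvPolynomial σ 𝕜) {c : σ → 𝕜 → 𝕜} {c' : σ → 𝕜}
    {x : 𝕜} (hc : ∀ j, HasDerivAt (c j) (c' j) x) :
    HasDerivAt (fun s => eval (fun j => c j s) p)
      (∑ j, eval (fun j => c j x) (pderiv j p) * c' j) x := by
  classical
  induction p using MvPolynomial.induction_on with
  | C a => simpa using hasDerivAt_const x a
  | add p q hp hq => simpa [add_mul, Finset.sum_add_distrib] using hp.fun_add hq
  | mul_X p j hp =>
    simp only [map_mul, eval_X]
    refine (hp.fun_mul (hc j)).congr_deriv ?_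
    simp only [Derivation.leibniz, pderiv_X, Pi.single_apply, apply_ite, smul_eq_mul, mul_one,
      mul_zero, map_add, map_zero, map_mul, eval_X, add_mul, ite_mul, zero_mul, sum_add_distrib,
      sum_ite_eq, mem_univ, ↓reduceIte, sum_mul, add_comm, add_right_inj]
    exact Finset.sum_congr rfl fun _ _ => by ring

theorem IsWeightedHomogeneous.hasDerivAt_eval_of_eq_zero [Fintype σ] {w : σ → ℕ} {n : ℕ}
    {A : MvPolynomial σ 𝕜} (hA : A.IsWeightedHomogeneous w n) (hw : ∀ j, w j < n)
    {c : σ → 𝕜 → 𝕜} {c' : σ → 𝕜} {x : 𝕜} (hc : ∀ j, HasDerivAt (c j) (c' j) x)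
    (hc0 : ∀ j, c j x = 0) :
    HasDerivAt (fun s => eval (fun j => c j s) A) 0 x := by
  convert hasDerivAt_eval A hc using 1
  refine (Finset.sum_eq_zero fun j _ => ?_).symm
  have hpd := hA.pderiv (n' := n - w j) (i := j) (by have := hw j; omega)
  rw [show (fun j => c j x) = 0 from _root_.funext hc0, hpd.eval_zero (by have := hw j; omega),
    zero_mul]

end MvPolynomial

section LineCoeff

variable {σ 𝕜 : Type*}

/-- The coefficient `a_k^p(y; z)` of `λ^k` in `p(y + λz)`. -/
noncomputable def lineCoeff [CommSemiring 𝕜] (p : MvPolynomial σ 𝕜) (k : ℕ) (y z : σ → 𝕜) : 𝕜 :=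
  (MvPolynomial.aeval (fun j => C (y j) + C (z j) * X) p).coeff k

theorem lineCoeff_sum [CommSemiring 𝕜] {ι : Type*} (s : Finset ι) (p : ι → MvPolynomial σ 𝕜)
    (k : ℕ) (y z : σ → 𝕜) : lineCoeff (∑ j ∈ s, p j) k y z = ∑ j ∈ s, lineCoeff (p j) k y z := by
  simp [lineCoeff]

theorem MvPolynomial.IsHomogeneous.lineCoeff_zero [CommSemiring 𝕜] {p : MvPolynomial σ 𝕜}
    {d : ℕ} (hp : p.IsHomogeneous d) (k : ℕ) (z : σ → 𝕜) :
    lineCoeff p k 0 z = if k = d then MvPolynomial.eval z p else 0 := by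
  simp [lineCoeff, hp.aeval_C_mul_X]

theorem lineCoeff_sum_range_zero [CommSemiring 𝕜] {p : ℕ → MvPolynomial σ 𝕜} {N k : ℕ}
    (hp : ∀ j < N, (p j).IsHomogeneous j) (hk : k < N) (z : σ → 𝕜) :
    lineCoeff (∑ j ∈ range N, p j) k 0 z = MvPolynomial.eval z (p k) := by
  rw [lineCoeff_sum, Finset.sum_eq_single_of_mem k (mem_range.mpr hk)]
  · simp [(hp k hk).lineCoeff_zero]
  · intro j hj hjk
    simp [(hp j (mem_range.mp hj)).lineCoeff_zero, hjk.symm]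

theorem lineCoeff_pderiv_sum_range_zero [CommSemiring 𝕜] {p : ℕ → MvPolynomial σ 𝕜} {N k : ℕ}
    (hp : ∀ j < N + 1, (p j).IsHomogeneous j) (hk : k < N) (i : σ) (z : σ → 𝕜) :
    lineCoeff (MvPolynomial.pderiv i (∑ j ∈ range (N + 1), p j)) k 0 z =
      MvPolynomial.eval z (MvPolynomial.pderiv i (p (k + 1))) := by
  have hc := MvPolynomial.totalDegree_eq_zero_iff_eq_C.mp
    ((MvPolynomial.totalDegree_zero_iff_isHomogeneous _).mpr (hp 0 N.succ_pos))
  rw [Finset.sum_range_succ', map_add, hc, MvPolynomial.pderiv_C, add_zero, map_sum]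
  exact lineCoeff_sum_range_zero (fun j hj => (hp (j + 1) (by omega)).pderiv) hk z

theorem hasDerivAt_lineCoeff [NontriviallyNormedField 𝕜] [Fintype σ] [DecidableEq σ]
    (p : MvPolynomial σ 𝕜) (k : ℕ) (y z : σ → 𝕜) (i : σ) :
    HasDerivAt (fun s => lineCoeff p k (Function.update y i s) z)
      (lineCoeff (MvPolynomial.pderiv i p) k y z) (y i) := by
  -- Make `s` a second polynomial variable: `p(χ) ∈ 𝕜[λ][s]` specialises at `s` to the polynomial
  -- defining `lineCoeff p · (update y i s) z`, and its `s`-derivative is given by the chain rule.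
  set χ : σ → 𝕜[X][X] :=
    Function.update (fun j => C (C (y j) + C (z j) * X)) i (X + C (C (z i) * X))
  have hχ : ∀ s, (fun j => (χ j).eval (C s)) =
      fun j => C (Function.update y i s j) + C (z j) * X := by
    intro s; funext j
    rcases eq_or_ne j i with rfl | hj <;> simp [χ, *]
  have heval : ∀ (s : 𝕜) (q : MvPolynomial σ 𝕜),
      (MvPolynomial.aeval χ q).eval (C s) = MvPolynomial.aeval (fun j => (χ j).eval (C s)) q := by
    intro s q
    simpa [coe_aeval_eq_eval] using
      MvPolynomial.comp_aeval_apply ((Polynomial.aeval (C s)).restrictScalars 𝕜) q (f := χ)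
  have hderiv :
      derivative (MvPolynomial.aeval χ p) = MvPolynomial.aeval χ (MvPolynomial.pderiv i p) := by
    have := (derivative' (R := 𝕜[X])).restrictScalars 𝕜 |>.map_aeval_mvPolynomial χ p
    simpa [χ, Function.update_apply, apply_ite] using this
  have := hasDerivAt_coeff_eval_C (MvPolynomial.aeval χ p) k (y i)
  simpa [lineCoeff, heval, hχ, hderiv] using this

end LineCoeff

theorem hasDerivAt_div_sub_eval_div {𝕜 : Type*} [NontriviallyNormedField 𝕜] {m : ℕ}
    {A : MvPolynomial (Fin m) 𝕜}
    (hA : A.IsWeightedHomogeneous (fun j : Fin m => j.1 + 1) (m + 1))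
    {u : ℕ → 𝕜 → 𝕜} {u' : ℕ → 𝕜} {x : 𝕜} (hu : ∀ k ≤ m + 1, HasDerivAt (u k) (u' k) x)
    (hu0 : u 0 x = 1) (hu0' : u' 0 = 0) (hvan : ∀ k, 1 ≤ k → k ≤ m → u k x = 0) :
    HasDerivAt (fun s => u (m + 1) s / u 0 s -
        MvPolynomial.eval (fun j : Fin m => u (j.1 + 1) s / u 0 s) A) (u' (m + 1)) x := by
  have hratio : ∀ k ≤ m + 1, HasDerivAt (fun s => u k s / u 0 s) (u' k) x := fun k hk => by
    simpa [hu0, hu0'] using (hu k hk).fun_div (hu 0 (by omega)) (by simp [hu0])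
  have hAder := hA.hasDerivAt_eval_of_eq_zero (fun j => by omega)
    (fun j => hratio (j.1 + 1) (by omega)) (fun j => by simp [hvan _ _ j.2, hu0])
  simpa using (hratio (m + 1) le_rfl).fun_sub hAder

theorem stmt18_general (n m : ℕ) (hm : 2 ≤ m)
    (fk : ℕ → MvPolynomial (Fin n) ℂ)
    (hfk : ∀ k ≤ 2 * m, (fk k).IsHomogeneous k)
    (hf0 : fk 0 = 1)
    (hfv : ∀ k, 1 ≤ k → k ≤ m → fk k = 0)
    (A : MvPolynomial (Fin m) ℂ)
    (hA : A.IsWeightedHomogeneous (fun i : Fin m => i.1 + 1) (m + 1)) :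
    let f : MvPolynomial (Fin (n + 1)) ℂ :=
      ∑ k ∈ Finset.range (2 * m + 1),
        MvPolynomial.X 0 ^ (2 * m - k) * MvPolynomial.rename Fin.succ (fk k)
    let a : ℕ → (Fin n → ℂ) → (Fin n → ℂ) → ℂ := fun k y z =>
      (MvPolynomial.aeval (Fin.cons (1 : Polynomial ℂ)
        (fun j => Polynomial.C (y j) + Polynomial.C (z j) * Polynomial.X)) f).coeff k
    let B : (Fin n → ℂ) → (Fin n → ℂ) → ℂ := fun y z =>
      a (m + 1) y z / a 0 y z -
        MvPolynomial.eval (fun j : Fin m => a (j.1 + 1) y z / a 0 y z) A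
    (∀ z : Fin n → ℂ, B 0 z = MvPolynomial.eval z (fk (m + 1))) ∧
      ∀ (i : Fin n) (z : Fin n → ℂ),
        deriv (fun s : ℂ => B ((Pi.single i s : Fin n → ℂ)) z) 0 =
          MvPolynomial.eval z (MvPolynomial.pderiv i (fk (m + 2))) := by
  intro f a B
  set F := ∑ k ∈ range (2 * m + 1), fk k
  have hhom : ∀ j < 2 * m + 1, (fk j).IsHomogeneous j := fun j hj => hfk j (by omega)
  have ha : ∀ k y z, a k y z = lineCoeff F k y z := fun k y z => by
    simp only [a, f, MvPolynomial.aeval_cons_one_sum_X_zero_pow_mul_rename, lineCoeff, F]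
  have hval : ∀ z, ∀ k ≤ 2 * m, a k 0 z = MvPolynomial.eval z (fk k) := fun z k hk => by
    rw [ha, lineCoeff_sum_range_zero hhom (by omega)]
  have hvan : ∀ z k, 1 ≤ k → k ≤ m → a k 0 z = 0 := fun z k hk1 hkm => by
    rw [hval z k (by omega), hfv k hk1 hkm, map_zero]
  have ha0 : ∀ z, a 0 0 z = 1 := fun z => by rw [hval z 0 (by omega), hf0, map_one]
  refine ⟨fun z => ?_, fun i z => ?_⟩
  · have hargs : (fun j : Fin m => a (j.1 + 1) 0 z / a 0 0 z) = 0 :=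
      funext fun j => by simp [hvan z (j.1 + 1) (by omega) (by omega)]
    simp only [B]
    rw [hargs, hA.eval_zero (by omega), ha0, hval z (m + 1) (by omega), div_one, sub_zero]
  · have hder : ∀ k < 2 * m, HasDerivAt (fun s => a k (Pi.single i s) z)
        (MvPolynomial.eval z (MvPolynomial.pderiv i (fk (k + 1)))) 0 := fun k hk => by
      have h := hasDerivAt_lineCoeff F k 0 z i
      rw [lineCoeff_pderiv_sum_range_zero hhom hk] at h
      simp only [ha]
      exact h
    refine (hasDerivAt_div_sub_eval_div hA (fun k hk => hder k (by omega)) ?_ ?_ ?_).deriv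
    · simpa using ha0 z
    · simp [hfv 1 le_rfl (by omega)]
    · intro k hk1 hkm; simpa using hvan z k hk1 hkm

/-- Let `f = ∑_k t_0^{2m-k} f_k(t_1,…,t_n)` with `f_0 = 1` and `f_1 = ⋯ = f_m = 0`, and
let `A = A_{m+1}` be the weighted homogeneous polynomial of weighted degree `m+1`
characterizing ECO polynomials (hypotheses `hA`, `hAeco`). With `a_k(y;z)` the
`λ`-expansion coefficients of `f(1, y+λz)` and
`B(y;z) = a_{m+1}/a_0 - A(a_1/a_0, …, a_m/a_0)`, one has `B(0;z) = f_{m+1}(z)` and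
`∂B/∂y_i(0;z) = ∂f_{m+2}/∂t_i(z)` for all `i`. -/
theorem stmt18 (n m : ℕ) (hn : 1 ≤ n) (hm : 2 ≤ m)
    (fk : ℕ → MvPolynomial (Fin n) ℂ)
    (hfk : ∀ k ≤ 2 * m, (fk k).IsHomogeneous k)
    (hf0 : fk 0 = 1)
    (hfv : ∀ k, 1 ≤ k → k ≤ m → fk k = 0)
    (A : MvPolynomial (Fin m) ℂ)
    (hA : A.IsWeightedHomogeneous (fun i : Fin m => i.1 + 1) (m + 1))
    (hAeco : ∀ a : ℕ → ℂ, a 0 = 1 →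
      (∃ r : Polynomial ℂ, r.natDegree ≤ m ∧
        ∑ k ∈ Finset.range (2 * m + 1), Polynomial.C (a k) * Polynomial.X ^ k = r ^ 2) →
      a (m + 1) = MvPolynomial.eval (fun i : Fin m => a (i.1 + 1)) A) :
    let f : MvPolynomial (Fin (n + 1)) ℂ :=
      ∑ k ∈ Finset.range (2 * m + 1),
        MvPolynomial.X 0 ^ (2 * m - k) * MvPolynomial.rename Fin.succ (fk k)
    let a : ℕ → (Fin n → ℂ) → (Fin n → ℂ) → ℂ := fun k y z =>
      (MvPolynomial.aeval (Fin.cons (1 : Polynomial ℂ)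
        (fun j => Polynomial.C (y j) + Polynomial.C (z j) * Polynomial.X)) f).coeff k
    let B : (Fin n → ℂ) → (Fin n → ℂ) → ℂ := fun y z =>
      a (m + 1) y z / a 0 y z -
        MvPolynomial.eval (fun j : Fin m => a (j.1 + 1) y z / a 0 y z) A
    (∀ z : Fin n → ℂ, B 0 z = MvPolynomial.eval z (fk (m + 1))) ∧
      ∀ (i : Fin n) (z : Fin n → ℂ),
        deriv (fun s : ℂ => B ((Pi.single i s : Fin n → ℂ)) z) 0 =
          MvPolynomial.eval z (MvPolynomial.pderiv i (fk (m + 2))) :=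
  stmt18_general n m hm fk hfk hf0 hfv A hA
end
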